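/- arXiv:2407.07904 — 2 statements merged into one kernel-verified Lean document; each statement's English description precedes it below -/
import Mathlib

section
/- Let r, K, a, γ, β, N be positive parameters with β > γK²/(a² + K²) and let τ ≥ 0. Then the equilibrium (K, 0) of the delayed predator–prey system x'(t) = r(1 − x(t)/K)x(t) − γ x(t)² y(t)/(a² + x(t)²), y'(t) = −β y(t) + (γ x(t−τ)²/(a² + x(t−τ)²)) y(t−τ) e^{−y(t−τ)/N} is locally asymptotically stable: for every ε > 0 there exists δ > 0 such that every solution whose nonnegative continuous initial condition φ : [−τ, 0] → ℝ² satisfies sup_{θ ∈ [−τ,0]} ‖φ(θ) − (K, 0)‖ < δ remains within distance ε of (K, 0) for all t ≥ 0 and converges to (K, 0) as t → +∞. -/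
/-!
Near `(K, 0)` the predator equation behaves like `y' = -β y + c y(t - τ)` with
`c < β` close to `γK²/(a² + K²)`, and the prey equation like `x' = -r (x - K)`. Choose `μ > 0`
with `c e^{μτ} + μ < β` (a Halanay-type rate) and `0 < ρ ≤ min μ (r/4)`. The weighted deviations
`(x - K) e^{ρt}` and `y e^{μt}` can then never leave a small box `(-η, η) × (-δ, δ)`: at a first
contact with a face the vector field points strictly into the box, the delayed term being
controlled by the history of the solution in the box. Staying in the box is the stability
statement, and the exponential weights give convergence.
-/
open Set Filter

/-- `(x, y)` is a solution on `[-τ, ∞)` of the delayed predator–prey system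
with initial condition `(φ₁, φ₂)` on `[-τ, 0]`. -/
def IsSolution (r K a γ β N τ : ℝ) (φ₁ φ₂ : ℝ → ℝ) (x y : ℝ → ℝ) : Prop :=
  ContinuousOn x (Ici (-τ)) ∧ ContinuousOn y (Ici (-τ)) ∧
  (∀ θ ∈ Icc (-τ) 0, x θ = φ₁ θ ∧ y θ = φ₂ θ) ∧
  (∀ t > (0 : ℝ),
    HasDerivAt x (r * (1 - x t / K) * x t - γ * (x t) ^ 2 * y t / (a ^ 2 + (x t) ^ 2)) t ∧
    HasDerivAt y (-β * y t + γ * (x (t - τ)) ^ 2 / (a ^ 2 + (x (t - τ)) ^ 2) * y (t - τ) *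
      Real.exp (-(y (t - τ)) / N)) t)

open Real Topology

theorem HasDerivAt.nonneg_of_isMaxOn_Icc {f : ℝ → ℝ} {f' a t : ℝ} (hf : HasDerivAt f f' t)
    (hat : a < t) (hmax : IsMaxOn f (Icc a t) t) : 0 ≤ f' := by
  have hcone : a - t ∈ posTangentConeAt (Icc a t) t :=
    sub_mem_posTangentConeAt_of_segment_subset (by rw [segment_symm, segment_eq_Icc hat.le])
  have h := hmax.localize.hasFDerivWithinAt_nonpos hf.hasFDerivAt.hasFDerivWithinAt hcone
  have h' : (a - t) * f' ≤ 0 := by simpa using h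
  nlinarith

theorem ContinuousOn.forall_lt_of_first_touch {f : ℝ → ℝ} {a c : ℝ} (hf : ContinuousOn f (Ici a))
    (ha : f a < c) (htouch : ∀ t > a, (∀ s ∈ Icc a t, f s ≤ c) → f t < c) :
    ∀ t ≥ a, f t < c := by
  intro t hat
  by_contra! hct
  have hIcc : ∀ s ≥ a, ContinuousOn f (Icc a s) := fun s _ => hf.mono Icc_subset_Ici_self
  have hcross : ∀ s ≥ a, c ≤ f s → ∃ u ∈ Icc a s, f u = c := fun s has hcs =>
    intermediate_value_Icc has (hIcc s has) ⟨ha.le, hcs⟩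
  have hZ : IsCompact (Icc a t ∩ f ⁻¹' {c}) :=
    isCompact_Icc.of_isClosed_subset
      ((hIcc t hat).preimage_isClosed_of_isClosed isClosed_Icc isClosed_singleton)
      inter_subset_left
  obtain ⟨t₀, ⟨ht₀, hft₀⟩, hleast⟩ := hZ.exists_isLeast (hcross t hat hct)
  have hat₀ : a < t₀ := lt_of_le_of_ne ht₀.1 (by rintro rfl; exact ha.ne hft₀)
  refine (htouch t₀ hat₀ fun s hs => ?_).ne hft₀
  by_contra! hcs
  obtain ⟨u, hu, hfu⟩ := hcross s hs.1 hcs.le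
  have ht₀u : t₀ ≤ u := hleast ⟨⟨hu.1, hu.2.trans (hs.2.trans ht₀.2)⟩, hfu⟩
  have hst₀ : s = t₀ := le_antisymm hs.2 (ht₀u.trans hu.2)
  exact hcs.ne' (hst₀ ▸ hft₀)

theorem HasDerivAt.mul_nonneg_of_forall_abs_le {u : ℝ → ℝ} {u' a t : ℝ} (hu : HasDerivAt u u' t)
    (hat : a < t) (hmax : ∀ s ∈ Icc a t, |u s| ≤ |u t|) : 0 ≤ u t * u' := by
  have hsq := (hu.mul hu).nonneg_of_isMaxOn_Icc hat fun s hs =>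
    abs_le_iff_mul_self_le.mp (hmax s hs)
  linarith

theorem forall_abs_lt_of_mul_deriv_neg {u v u' v' : ℝ → ℝ} {a A B : ℝ}
    (hu : ContinuousOn u (Ici a)) (hv : ContinuousOn v (Ici a)) (hua : |u a| < A) (hva : |v a| < B)
    (hu' : ∀ t > a, HasDerivAt u (u' t) t) (hv' : ∀ t > a, HasDerivAt v (v' t) t)
    (hu_face : ∀ t > a, (∀ s ∈ Icc a t, |u s| ≤ A ∧ |v s| ≤ B) → |u t| = A → u t * u' t < 0)
    (hv_face : ∀ t > a, (∀ s ∈ Icc a t, |u s| ≤ A ∧ |v s| ≤ B) → |v t| = B → v t * v' t < 0) :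
    ∀ t ≥ a, |u t| < A ∧ |v t| < B := by
  have hcont : ContinuousOn (fun s => max (|u s| - A) (|v s| - B)) (Ici a) := by fun_prop
  have key := hcont.forall_lt_of_first_touch (c := 0) (max_lt (by linarith) (by linarith))
    fun t hat hhist => by
      have hbox : ∀ s ∈ Icc a t, |u s| ≤ A ∧ |v s| ≤ B := fun s hs => by
        simpa only [max_le_iff, sub_nonpos] using hhist s hs
      have hut : |u t| < A := (hbox t ⟨hat.le, le_rfl⟩).1.lt_of_ne fun h =>
        (hu_face t hat hbox h).not_ge <|
          (hu' t hat).mul_nonneg_of_forall_abs_le hat fun s hs => h ▸ (hbox s hs).1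
      have hvt : |v t| < B := (hbox t ⟨hat.le, le_rfl⟩).2.lt_of_ne fun h =>
        (hv_face t hat hbox h).not_ge <|
          (hv' t hat).mul_nonneg_of_forall_abs_le hat fun s hs => h ▸ (hbox s hs).2
      exact max_lt (sub_neg.mpr hut) (sub_neg.mpr hvt)
  intro t ht
  simpa only [max_lt_iff, sub_neg] using key t ht

theorem abs_le_abs_mul_exp (z : ℝ) {s : ℝ} (hs : 0 ≤ s) : |z| ≤ |z * Real.exp s| := by
  rw [abs_mul, abs_exp]
  exact le_mul_of_one_le_right (abs_nonneg z) (one_le_exp hs)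

theorem HasDerivAt.mul_exp_const_mul {f : ℝ → ℝ} {f' t : ℝ} (hf : HasDerivAt f f' t) (ρ : ℝ) :
    HasDerivAt (fun s => f s * Real.exp (ρ * s)) ((f' + ρ * f t) * Real.exp (ρ * t)) t := by
  have he : HasDerivAt (fun s => Real.exp (ρ * s)) (Real.exp (ρ * t) * ρ) t := by
    simpa using ((hasDerivAt_id t).const_mul ρ).exp
  exact (hf.fun_mul he).congr_deriv (by ring)

theorem tendsto_zero_of_abs_mul_exp_le {f : ℝ → ℝ} {ρ C : ℝ} (hρ : 0 < ρ)
    (hf : ∀ t ≥ 0, |f t * exp (ρ * t)| ≤ C) : Tendsto f atTop (𝓝 0) := by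
  have hdecay : Tendsto (fun t => C * exp (-(ρ * t))) atTop (𝓝 0) := by
    simpa using (tendsto_exp_atBot.comp
      (tendsto_neg_atTop_atBot.comp (tendsto_id.const_mul_atTop hρ))).const_mul C
  refine squeeze_zero_norm' ?_ hdecay
  filter_upwards [eventually_ge_atTop 0] with t ht
  rw [norm_eq_abs, exp_neg, ← div_eq_mul_inv, le_div_iff₀ (exp_pos _)]
  simpa [abs_mul] using hf t ht

theorem exists_pos_mul_exp_add_lt {c β : ℝ} (hcβ : c < β) (τ : ℝ) :
    ∃ μ > 0, c * exp (μ * τ) + μ < β := by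
  have hcont : ContinuousAt (fun μ : ℝ => c * exp (μ * τ) + μ) 0 := by fun_prop
  have hlt : ∀ᶠ μ in 𝓝 0, c * exp (μ * τ) + μ < β :=
    hcont.eventually_lt continuousAt_const (by simpa using hcβ)
  obtain ⟨μ, hμβ, hμ⟩ :=
    ((hlt.filter_mono nhdsWithin_le_nhds).and (self_mem_nhdsWithin (s := Ioi 0))).exists
  exact ⟨μ, hμ, hμβ⟩

noncomputable def preyRate (r K a γ x y : ℝ) : ℝ :=
  r * (1 - x / K) * x - γ * x ^ 2 * y / (a ^ 2 + x ^ 2)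

/-- The predator equation reads `y' = -β y + predatorBirthRate γ a N x_τ y_τ * y_τ`, where
`x_τ = x (t - τ)` and `y_τ = y (t - τ)`. -/
noncomputable def predatorBirthRate (γ a N x y : ℝ) : ℝ :=
  γ * x ^ 2 / (a ^ 2 + x ^ 2) * Real.exp (-y / N)

section Model

variable {r K a γ N : ℝ}

theorem abs_predation_le (hγ : 0 ≤ γ) (x y : ℝ) :
    |γ * x ^ 2 * y / (a ^ 2 + x ^ 2)| ≤ γ * |y| := by
  have hfrac : x ^ 2 / (a ^ 2 + x ^ 2) ≤ 1 := div_le_one_of_le₀ (by nlinarith) (by positivity)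
  rw [show γ * x ^ 2 * y / (a ^ 2 + x ^ 2) = γ * (x ^ 2 / (a ^ 2 + x ^ 2)) * y by ring,
    abs_mul, abs_mul, abs_of_nonneg hγ, abs_of_nonneg (by positivity : 0 ≤ x ^ 2 / (a ^ 2 + x ^ 2))]
  exact mul_le_mul_of_nonneg_right (mul_le_of_le_one_right hγ hfrac) (abs_nonneg y)

theorem sub_mul_preyRate_le (hK : 0 < K) (hr : 0 ≤ r) (hγ : 0 ≤ γ) {x : ℝ} (hx : |x - K| ≤ K / 2)
    (y : ℝ) : (x - K) * preyRate r K a γ x y ≤ -(r / 2) * (x - K) ^ 2 + γ * |x - K| * |y| := by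
  have hlogistic : r * (1 - x / K) * x = -(r * x / K) * (x - K) := by field_simp; ring
  have hxK : K / 2 ≤ x := by linarith [(abs_le.mp hx).1]
  have hrx : r / 2 ≤ r * x / K := by rw [le_div_iff₀ hK]; nlinarith
  have hpred : -((x - K) * (γ * x ^ 2 * y / (a ^ 2 + x ^ 2))) ≤ γ * |x - K| * |y| := by
    refine (neg_le_abs _).trans ?_
    rw [abs_mul]
    nlinarith [mul_le_mul_of_nonneg_left (abs_predation_le (a := a) hγ x y) (abs_nonneg (x - K))]
  unfold preyRate
  rw [hlogistic]
  nlinarith [mul_le_mul_of_nonneg_right hrx (sq_nonneg (x - K))]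

theorem predatorBirthRate_nonneg (hγ : 0 ≤ γ) (x y : ℝ) : 0 ≤ predatorBirthRate γ a N x y := by
  unfold predatorBirthRate; positivity

theorem eventually_predatorBirthRate_lt (hK : K ≠ 0) {c : ℝ}
    (hc : γ * K ^ 2 / (a ^ 2 + K ^ 2) < c) :
    ∀ᶠ p in 𝓝 ((K, 0) : ℝ × ℝ), predatorBirthRate γ a N p.1 p.2 < c := by
  have hden : a ^ 2 + K ^ 2 ≠ 0 := by positivity
  have hcont : ContinuousAt (fun p : ℝ × ℝ => predatorBirthRate γ a N p.1 p.2) (K, 0) := by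
    unfold predatorBirthRate
    fun_prop (disch := exact hden)
  exact hcont.eventually_lt continuousAt_const (by simpa [predatorBirthRate] using hc)

theorem prey_points_inward (hK : 0 < K) (hr : 0 ≤ r) (hγ : 0 ≤ γ) {x y ρ E δ η : ℝ}
    (hρ : ρ ≤ r / 4) (hE : 0 < E) (hx : |x - K| ≤ K / 2) (hface : |(x - K) * E| = η)
    (hy : |y| * E ≤ δ) (hγδ : 4 * γ * δ < r * η) :
    (x - K) * E * ((preyRate r K a γ x y + ρ * (x - K)) * E) < 0 := by
  have hdrift := sub_mul_preyRate_le (a := a) hK hr hγ hx y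
  have hdE : |x - K| * E = η := by rwa [abs_mul, abs_of_pos hE] at hface
  have hδ : 0 ≤ δ := (mul_nonneg (abs_nonneg y) hE.le).trans hy
  have hη : 0 < η := pos_of_mul_pos_right (by nlinarith [mul_nonneg hγ hδ]) hr
  calc (x - K) * E * ((preyRate r K a γ x y + ρ * (x - K)) * E)
      = E ^ 2 * ((x - K) * preyRate r K a γ x y + ρ * (x - K) ^ 2) := by ring
    _ ≤ E ^ 2 * (-(r / 4) * (x - K) ^ 2 + γ * |x - K| * |y|) :=
        mul_le_mul_of_nonneg_left (by nlinarith [sq_nonneg (x - K)]) (sq_nonneg E)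
    _ = -(r / 4) * (|x - K| * E) ^ 2 + γ * (|x - K| * E) * (|y| * E) := by
        rw [← sq_abs (x - K)]; ring
    _ ≤ -(r / 4) * η ^ 2 + γ * η * δ := by
        rw [hdE]; gcongr
    _ < 0 := by nlinarith

theorem predator_points_inward {y z G c β μ τ E δ : ℝ} (hG₀ : 0 ≤ G) (hGc : G ≤ c) (hδ : 0 < δ)
    (hface : |y * E| = δ) (hz : |z * E| ≤ δ * Real.exp (μ * τ))
    (hμ : c * Real.exp (μ * τ) + μ < β) : y * E * ((-β * y + G * z + μ * y) * E) < 0 := by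
  have hdelay : y * E * (G * (z * E)) ≤ δ * (c * (δ * Real.exp (μ * τ))) := by
    refine (le_abs_self _).trans ?_
    rw [abs_mul (y * E), hface, abs_mul G, abs_of_nonneg hG₀]
    gcongr
    exact hG₀.trans hGc
  have hsq : (y * E) ^ 2 = δ ^ 2 := by rw [← sq_abs, hface]
  calc y * E * ((-β * y + G * z + μ * y) * E)
      = (μ - β) * (y * E) ^ 2 + y * E * (G * (z * E)) := by ring
    _ ≤ δ ^ 2 * (c * Real.exp (μ * τ) + μ - β) := by rw [hsq]; nlinarith
    _ < 0 := mul_neg_of_pos_of_neg (by positivity) (by linarith)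

end Model

theorem IsSolution.forall_abs_mul_exp_lt {r K a γ β N τ : ℝ} {φ₁ φ₂ x y : ℝ → ℝ}
    (hsol : IsSolution r K a γ β N τ φ₁ φ₂ x y) (hK : 0 < K) (hr : 0 ≤ r) (hγ : 0 ≤ γ)
    (hτ : 0 ≤ τ) {c ρ μ δ η : ℝ} (hρ : 0 ≤ ρ) (hρμ : ρ ≤ μ) (hρr : ρ ≤ r / 4)
    (hμβ : c * exp (μ * τ) + μ < β) (hδ : 0 < δ) (hδη : δ ≤ η) (hηK : η ≤ K / 2)
    (hγδ : 4 * γ * δ < r * η)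
    (hbirth : ∀ u v, |u - K| ≤ η → |v| ≤ δ → predatorBirthRate γ a N u v ≤ c)
    (hinit : ∀ θ ∈ Icc (-τ) 0, |x θ - K| < δ ∧ |y θ| < δ) :
    ∀ t ≥ 0, |(x t - K) * exp (ρ * t)| < η ∧ |y t * exp (μ * t)| < δ := by
  obtain ⟨hx, hy, -, hderiv⟩ := hsol
  have hμ : 0 ≤ μ := hρ.trans hρμ
  have hhist : ∀ t ≥ 0,
      (∀ s ∈ Icc 0 t, |(x s - K) * exp (ρ * s)| ≤ η ∧ |y s * exp (μ * s)| ≤ δ) →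
      ∀ s ∈ Icc (-τ) t, |x s - K| ≤ η ∧ |y s| ≤ δ ∧ |y s * exp (μ * s)| ≤ δ := by
    intro t ht hbox s hs
    rcases le_total s 0 with hs0 | hs0
    · obtain ⟨hxs, hys⟩ := hinit s ⟨hs.1, hs0⟩
      have hexp : exp (μ * s) ≤ 1 := exp_le_one_iff.mpr (mul_nonpos_of_nonneg_of_nonpos hμ hs0)
      have hweighted : |y s * exp (μ * s)| ≤ |y s| := by
        rw [abs_mul, abs_exp]; exact mul_le_of_le_one_right (abs_nonneg _) hexp
      exact ⟨by linarith, hys.le, hweighted.trans hys.le⟩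
    · obtain ⟨hxs, hys⟩ := hbox s ⟨hs0, hs.2⟩
      exact ⟨(abs_le_abs_mul_exp _ (mul_nonneg hρ hs0)).trans hxs,
        (abs_le_abs_mul_exp _ (mul_nonneg hμ hs0)).trans hys, hys⟩
  have hx₀ : ContinuousOn x (Ici 0) := hx.mono (Ici_subset_Ici.mpr (by linarith))
  have hy₀ : ContinuousOn y (Ici 0) := hy.mono (Ici_subset_Ici.mpr (by linarith))
  have hinit₀ := hinit 0 ⟨by linarith, le_rfl⟩
  refine forall_abs_lt_of_mul_deriv_neg (by fun_prop) (by fun_prop)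
    (by simpa using hinit₀.1.trans_le hδη) (by simpa using hinit₀.2)
    (fun t ht => ((hderiv t ht).1.sub_const K).mul_exp_const_mul ρ)
    (fun t ht => ((hderiv t ht).2.mul_exp_const_mul μ).congr_deriv (by
      show _ = (-β * y t + predatorBirthRate γ a N (x (t - τ)) (y (t - τ)) * y (t - τ)
        + μ * y t) * exp (μ * t)
      unfold predatorBirthRate; ring)) ?_ ?_
  · intro t ht hbox hface
    obtain ⟨hxt, -, hyt⟩ := hhist t ht.le hbox t ⟨by linarith, le_rfl⟩
    have hyρ : |y t| * exp (ρ * t) ≤ δ := by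
      rw [abs_mul, abs_exp] at hyt
      refine le_trans ?_ hyt
      gcongr
    exact prey_points_inward hK hr hγ hρr (exp_pos _) (hxt.trans hηK) hface hyρ hγδ
  · intro t ht hbox hface
    obtain ⟨hxd, hyd, hyde⟩ := hhist t ht.le hbox (t - τ) ⟨by linarith, by linarith⟩
    have hz : |y (t - τ) * exp (μ * t)| ≤ δ * exp (μ * τ) := by
      rw [show μ * t = μ * (t - τ) + μ * τ by ring, exp_add, ← mul_assoc, abs_mul _ (exp _),
        abs_exp]
      gcongr
    exact predator_points_inward (predatorBirthRate_nonneg hγ _ _) (hbirth _ _ hxd hyd) hδ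
      hface hz hμβ

theorem exists_box_radii {r γ ε : ℝ} (hr : 0 < r) (hγ : 0 < γ) (hε : 0 < ε) :
    ∃ η δ, 0 < δ ∧ δ ≤ η ∧ η < ε ∧ 4 * γ * δ < r * η := by
  refine ⟨ε / 2, min (ε / 2) (r * ε / (16 * γ)), by positivity, min_le_left _ _, by linarith, ?_⟩
  calc 4 * γ * min (ε / 2) (r * ε / (16 * γ)) ≤ 4 * γ * (r * ε / (16 * γ)) := by
        gcongr; exact min_le_right _ _
    _ = r * (ε / 2) / 2 := by field_simp; ring
    _ < r * (ε / 2) := by linarith [mul_pos hr hε]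

theorem K_zero_locally_asymptotically_stable_general
    (r K a γ β N τ : ℝ) (hr : 0 < r) (hK : 0 < K) (hγ : 0 < γ)
    (hτ : 0 ≤ τ)
    (hcond : β > γ * K ^ 2 / (a ^ 2 + K ^ 2)) :
    ∀ ε > (0 : ℝ), ∃ δ > (0 : ℝ), ∀ φ₁ φ₂ : ℝ → ℝ,
      ContinuousOn φ₁ (Icc (-τ) 0) → ContinuousOn φ₂ (Icc (-τ) 0) →
      (∀ θ ∈ Icc (-τ) 0, 0 ≤ φ₁ θ ∧ 0 ≤ φ₂ θ) →
      (∀ θ ∈ Icc (-τ) 0, max |φ₁ θ - K| |φ₂ θ - 0| < δ) →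
      ∀ x y : ℝ → ℝ, IsSolution r K a γ β N τ φ₁ φ₂ x y →
        (∀ t ≥ (0 : ℝ), max |x t - K| |y t - 0| < ε) ∧
        Tendsto (fun t => (x t, y t)) atTop (nhds (K, 0)) := by
  intro ε hε
  obtain ⟨c, hc, hcβ⟩ := exists_between hcond
  obtain ⟨ε₁, hε₁, hbirth⟩ :=
    Metric.eventually_nhds_iff.mp (eventually_predatorBirthRate_lt (N := N) hK.ne' hc)
  obtain ⟨μ, hμ, hμβ⟩ := exists_pos_mul_exp_add_lt hcβ τ
  obtain ⟨η, δ, hδ, hδη, hη, hγδ⟩ :=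
    exists_box_radii hr hγ (by positivity : 0 < min (min ε ε₁) (K / 2))
  obtain ⟨⟨hηε, hηε₁⟩, hηK⟩ := by simpa only [lt_min_iff] using hη
  have hρ : 0 < min μ (r / 4) := lt_min hμ (by positivity)
  refine ⟨δ, hδ, fun φ₁ φ₂ _ _ _ hφ x y hsol => ?_⟩
  have hinit : ∀ θ ∈ Icc (-τ) 0, |x θ - K| < δ ∧ |y θ| < δ := fun θ hθ => by
    rw [(hsol.2.2.1 θ hθ).1, (hsol.2.2.1 θ hθ).2]
    simpa only [sub_zero, max_lt_iff] using hφ θ hθ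
  have hbound := hsol.forall_abs_mul_exp_lt hK hr.le hγ.le hτ hρ.le (min_le_left _ _)
    (min_le_right _ _) hμβ hδ hδη hηK.le hγδ (fun u v hu hv => (hbirth (y := (u, v)) (by
      rw [Prod.dist_eq, Real.dist_eq, Real.dist_eq, sub_zero]
      exact max_lt (hu.trans_lt hηε₁) (hv.trans_lt (hδη.trans_lt hηε₁)))).le) hinit
  refine ⟨fun t ht => ?_, ?_⟩
  · rw [sub_zero, max_lt_iff]
    exact ⟨((abs_le_abs_mul_exp _ (by positivity)).trans_lt (hbound t ht).1).trans hηε,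
      ((abs_le_abs_mul_exp _ (by positivity)).trans_lt (hbound t ht).2).trans_le
        (hδη.trans hηε.le)⟩
  · have hx := tendsto_zero_of_abs_mul_exp_le hρ fun t ht => (hbound t ht).1.le
    have hy := tendsto_zero_of_abs_mul_exp_le hμ fun t ht => (hbound t ht).2.le
    simpa using (hx.add_const K).prodMk_nhds hy

/-- If `β > γK²/(a² + K²)`, then for every `τ ≥ 0` the equilibrium
`(K, 0)` of the delayed predator–prey system is locally asymptotically stable: for every
`ε > 0` there is `δ > 0` such that every solution whose nonnegative continuous initial
condition lies uniformly within distance `δ` of `(K, 0)` (in the maximum norm) stays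
within distance `ε` of `(K, 0)` for all `t ≥ 0` and converges to `(K, 0)`. -/
theorem K_zero_locally_asymptotically_stable
    (r K a γ β N τ : ℝ) (hr : 0 < r) (hK : 0 < K) (ha : 0 < a) (hγ : 0 < γ)
    (hβ : 0 < β) (hN : 0 < N) (hτ : 0 ≤ τ)
    (hcond : β > γ * K ^ 2 / (a ^ 2 + K ^ 2)) :
    ∀ ε > (0 : ℝ), ∃ δ > (0 : ℝ), ∀ φ₁ φ₂ : ℝ → ℝ,
      ContinuousOn φ₁ (Icc (-τ) 0) → ContinuousOn φ₂ (Icc (-τ) 0) →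
      (∀ θ ∈ Icc (-τ) 0, 0 ≤ φ₁ θ ∧ 0 ≤ φ₂ θ) →
      (∀ θ ∈ Icc (-τ) 0, max |φ₁ θ - K| |φ₂ θ - 0| < δ) →
      ∀ x y : ℝ → ℝ, IsSolution r K a γ β N τ φ₁ φ₂ x y →
        (∀ t ≥ (0 : ℝ), max |x t - K| |y t - 0| < ε) ∧
        Tendsto (fun t => (x t, y t)) atTop (nhds (K, 0)) :=
  K_zero_locally_asymptotically_stable_general r K a γ β N τ hr hK hγ hτ hcond
end

section
/- Let r, K, a, γ, β, N be positive parameters with γK²/(a² + K²) > β, and let (x*, y*) with x* > 0, y* > 0 satisfy γx*y*/(a² + x*²) = r(1 − x*/K) and β = (γx*²/(a² + x*²)) e^{−y*/N}. Define m = r(1 − x*/K)(2a²/(a² + x*²) − 1) + β + r x*/K, n = β(y*/N − 1), p = −β(β − m), q = −βr(1 − 2x*/K), and assume (H2): (r x*/K + β y*/N)/(r(1 − x*/K)) > 1 − 2a²/(a² + x*²), (H3): γ x* y* a²/(a² + x*²)² > r(1 − 2x*/K), and in addition 2p + n² − m² < 0. Then for every delay τ ≥ 0, every complex root λ of λ²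 + mλ + nλe^{−λτ} + p + qe^{−λτ} = 0 has negative real part; that is, the positive equilibrium (x*, y*) is locally absolutely stable. -/
/-!
If `Re λ ≥ 0` then `‖e^{-λτ}‖ ≤ 1`, so a root would force `‖λ² + mλ + p‖ ≤ ‖nλ + q‖`.
For `λ = x + iy` the difference of the squared moduli is
`(x² + (m-n)x + p-q)(x² + (m+n)x + p+q) + y²(2x² + 2mx + m² - n² - 2p) + y⁴`,
which is positive for `x ≥ 0` as soon as `m + n > 0`, `p ± q > 0` and `m² - n² - 2p > 0`
(these force `m - n > 0`).
For the predator–prey coefficients, (H2) is exactly `m + n > 0`, (H3) is `p + q > 0`, and the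
prey equilibrium equation gives `p - q = 2β r (1 - x*/K) a²/(a² + x*²) > 0`.
-/

open Complex

section CharacteristicEquation

variable {m n p q : ℝ}

theorem normSq_quadratic_sub_normSq_linear (m n p q : ℝ) (z : ℂ) :
    normSq (z ^ 2 + m * z + p) - normSq (n * z + q) =
      (z.re ^ 2 + (m - n) * z.re + (p - q)) * (z.re ^ 2 + (m + n) * z.re + (p + q)) +
        z.im ^ 2 * (2 * z.re ^ 2 + 2 * m * z.re + (m ^ 2 - n ^ 2 - 2 * p)) + z.im ^ 4 := by
  simp only [normSq_apply, pow_two, add_re, add_im, mul_re, mul_im, ofReal_re, ofReal_im]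
  ring

theorem norm_linear_lt_norm_quadratic (hmn : 0 < m + n) (hpq : 0 < p + q) (hqp : 0 < p - q)
    (hdisc : 2 * p + n ^ 2 - m ^ 2 < 0) {z : ℂ} (hz : 0 ≤ z.re) :
    ‖(n : ℂ) * z + q‖ < ‖z ^ 2 + m * z + p‖ := by
  have hnm : 0 < m - n := by nlinarith
  have hreal : 0 < (z.re ^ 2 + (m - n) * z.re + (p - q)) *
      (z.re ^ 2 + (m + n) * z.re + (p + q)) := by
    apply mul_pos <;> nlinarith
  have himag : 0 ≤ z.im ^ 2 * (2 * z.re ^ 2 + 2 * m * z.re + (m ^ 2 - n ^ 2 - 2 * p)) :=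
    mul_nonneg (sq_nonneg _) (by nlinarith)
  have hdiff := normSq_quadratic_sub_normSq_linear m n p q z
  rw [← sq_lt_sq₀ (norm_nonneg _) (norm_nonneg _), ← normSq_eq_norm_sq, ← normSq_eq_norm_sq]
  nlinarith [pow_nonneg (sq_nonneg z.im) 2]

theorem re_neg_of_quadratic_add_linear_mul_exp_eq_zero (hmn : 0 < m + n) (hpq : 0 < p + q)
    (hqp : 0 < p - q) (hdisc : 2 * p + n ^ 2 - m ^ 2 < 0) {τ : ℝ} (hτ : 0 ≤ τ) {z : ℂ}
    (hz : z ^ 2 + m * z + n * z * exp (-z * τ) + p + q * exp (-z * τ) = 0) :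
    z.re < 0 := by
  by_contra! hre
  have hroot : z ^ 2 + m * z + p = -((n * z + q) * exp (-z * τ)) := by linear_combination hz
  have hexp : ‖exp (-z * τ)‖ ≤ 1 := by
    rw [norm_exp, Real.exp_le_one_iff]
    simpa [mul_re] using mul_nonneg hre hτ
  have hlt := norm_linear_lt_norm_quadratic hmn hpq hqp hdisc hre
  rw [hroot, norm_neg, norm_mul] at hlt
  nlinarith [norm_nonneg ((n : ℂ) * z + q)]

end CharacteristicEquation

theorem positive_equilibrium_absolutely_stable_general
    (r K a γ β N xs ys : ℝ) (ha : 0 < a) (hγ : 0 < γ)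
    (hβ : 0 < β)
    (hxs : 0 < xs) (hys : 0 < ys)
    (heq1 : γ * xs * ys / (a ^ 2 + xs ^ 2) = r * (1 - xs / K))
    (m n p q : ℝ)
    (hm : m = r * (1 - xs / K) * (2 * a ^ 2 / (a ^ 2 + xs ^ 2) - 1) + β + r * xs / K)
    (hn : n = β * (ys / N - 1))
    (hp : p = -β * (β - m))
    (hq : q = -β * r * (1 - 2 * xs / K))
    (hH2 : (r * xs / K + β * ys / N) / (r * (1 - xs / K)) > 1 - 2 * a ^ 2 / (a ^ 2 + xs ^ 2))
    (hH3 : γ * xs * ys * a ^ 2 / (a ^ 2 + xs ^ 2) ^ 2 > r * (1 - 2 * xs / K))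
    (hA : 2 * p + n ^ 2 - m ^ 2 < 0) :
    ∀ τ : ℝ, 0 ≤ τ → ∀ z : ℂ,
      z ^ 2 + (m : ℂ) * z + (n : ℂ) * z * Complex.exp (-z * (τ : ℂ)) +
        (p : ℂ) + (q : ℂ) * Complex.exp (-z * (τ : ℂ)) = 0 →
      z.re < 0 := by
  intro τ hτ z hz
  have hprey : 0 < r * (1 - xs / K) := heq1 ▸ by positivity
  have hmn : 0 < m + n := by
    rw [hm, hn]
    linear_combination (lt_div_iff₀ hprey).mp hH2
  have hpq : p + q =
      2 * β * (γ * xs * ys * a ^ 2 / (a ^ 2 + xs ^ 2) ^ 2 - r * (1 - 2 * xs / K)) := by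
    -- so that `ring` treats `((a² + xs²) ^ 2)⁻¹` as `(a² + xs²)⁻¹ ^ 2`
    rw [hp, hq, hm, div_eq_mul_inv _ ((a ^ 2 + xs ^ 2) ^ 2), ← inv_pow]
    linear_combination (-2 * β * a ^ 2 / (a ^ 2 + xs ^ 2)) * heq1
  have hqp : p - q = 2 * β * (r * (1 - xs / K) * a ^ 2 / (a ^ 2 + xs ^ 2)) := by
    rw [hp, hq, hm]
    ring
  refine re_neg_of_quadratic_add_linear_mul_exp_eq_zero hmn ?_ ?_ hA hτ hz
  · rw [hpq]
    have := sub_pos.mpr hH3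
    positivity
  · rw [hqp]
    have := mul_pos hprey (pow_pos ha 2)
    positivity

/-- At a positive equilibrium `(x*, y*)` of the delayed predator–prey
system, under hypotheses (H2), (H3) and `2p + n² − m² < 0`, every complex root of the
characteristic equation `λ² + mλ + nλe^{−λτ} + p + qe^{−λτ} = 0` has negative real part
for every delay `τ ≥ 0`; i.e. the positive equilibrium is locally absolutely stable. -/
theorem positive_equilibrium_absolutely_stable
    (r K a γ β N xs ys : ℝ) (hr : 0 < r) (hK : 0 < K) (ha : 0 < a) (hγ : 0 < γ)
    (hβ : 0 < β) (hN : 0 < N)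
    (hexist : γ * K ^ 2 / (a ^ 2 + K ^ 2) > β)
    (hxs : 0 < xs) (hys : 0 < ys)
    (heq1 : γ * xs * ys / (a ^ 2 + xs ^ 2) = r * (1 - xs / K))
    (heq2 : β = γ * xs ^ 2 / (a ^ 2 + xs ^ 2) * Real.exp (-ys / N))
    (m n p q : ℝ)
    (hm : m = r * (1 - xs / K) * (2 * a ^ 2 / (a ^ 2 + xs ^ 2) - 1) + β + r * xs / K)
    (hn : n = β * (ys / N - 1))
    (hp : p = -β * (β - m))
    (hq : q = -β * r * (1 - 2 * xs / K))
    (hH2 : (r * xs / K + β * ys / N) / (r * (1 - xs / K)) > 1 - 2 * a ^ 2 / (a ^ 2 + xs ^ 2))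
    (hH3 : γ * xs * ys * a ^ 2 / (a ^ 2 + xs ^ 2) ^ 2 > r * (1 - 2 * xs / K))
    (hA : 2 * p + n ^ 2 - m ^ 2 < 0) :
    ∀ τ : ℝ, 0 ≤ τ → ∀ z : ℂ,
      z ^ 2 + (m : ℂ) * z + (n : ℂ) * z * Complex.exp (-z * (τ : ℂ)) +
        (p : ℂ) + (q : ℂ) * Complex.exp (-z * (τ : ℂ)) = 0 →
      z.re < 0 :=
  positive_equilibrium_absolutely_stable_general r K a γ β N xs ys ha hγ hβ hxs hys heq1 m n p q hm
    hn hp hq hH2 hH3 hA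
end
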